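/- If G is a hypo-unique-domination graph of order at least 3, then for any pair of vertices x, y of G, γ(G − {x,y}) ≥ γ(G) − 1. -/
import Mathlib


open SimpleGraph

variable {V : Type*}

/-- `D` is a dominating set of `G`. -/
def IsDomSet (G : SimpleGraph V) (D : Finset V) : Prop :=
  ∀ v : V, ∃ u ∈ D, u = v ∨ G.Adj u v

/-- The domination number `γ(G)`. -/
noncomputable def domNum (G : SimpleGraph V) : ℕ :=
  sInf {n | ∃ D : Finset V, IsDomSet G D ∧ D.card = n}

/-- `D` is a minimum dominating set (γ-set) of `G`. -/
def IsGammaSet (G : SimpleGraph V) (D : Finset V) : Prop :=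
  IsDomSet G D ∧ D.card = domNum G

/-- The graph `G - x` obtained by deleting the vertex `x`. -/
def vdel (G : SimpleGraph V) (x : V) : SimpleGraph {u : V // u ≠ x} :=
  SimpleGraph.comap Subtype.val G

/-- `G` is a hypo-unique-domination graph: `G` has at least two γ-sets,
but `G - x` has a unique γ-set for every vertex `x`. -/
def HypoUD (G : SimpleGraph V) : Prop :=
  (∃ D₁ D₂ : Finset V, IsGammaSet G D₁ ∧ IsGammaSet G D₂ ∧ D₁ ≠ D₂) ∧
  ∀ x : V, ∃! D : Finset {u : V // u ≠ x}, IsGammaSet (vdel G x) D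

/-- `D` is an efficient dominating set of `G`: every vertex is dominated exactly once. -/
def IsEDS (G : SimpleGraph V) (D : Finset V) : Prop :=
  ∀ v : V, ∃! u : V, u ∈ D ∧ (u = v ∨ G.Adj u v)

/-- `G` is a hypo-efficient-domination graph: `G` has no EDS,
but `G - x` has an EDS for every vertex `x`. -/
def HypoED (G : SimpleGraph V) : Prop :=
  (¬ ∃ D : Finset V, IsEDS G D) ∧
  ∀ x : V, ∃ D : Finset {u : V // u ≠ x}, IsEDS (vdel G x) D

/-- The graph `G - {x, y}` obtained by deleting the vertices `x` and `y`. -/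
def vdel2 (G : SimpleGraph V) (x y : V) : SimpleGraph {u : V // u ≠ x ∧ u ≠ y} :=
  SimpleGraph.comap Subtype.val G


section Aux

lemma domNum_le' {W : Type*} (H : SimpleGraph W) {D : Finset W} (hD : IsDomSet H D) :
    domNum H ≤ D.card := Nat.sInf_le ⟨D, hD, rfl⟩

lemma exists_gammaSet {W : Type*} [Fintype W] (H : SimpleGraph W) :
    ∃ D : Finset W, IsDomSet H D ∧ D.card = domNum H := by
  have hne : Set.Nonempty {n | ∃ D : Finset W, IsDomSet H D ∧ D.card = n} :=
    ⟨Finset.univ.card, Finset.univ, fun v => ⟨v, Finset.mem_univ v, Or.inl rfl⟩, rfl⟩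
  obtain ⟨D, hD, hc⟩ := Nat.sInf_mem hne
  exact ⟨D, hD, hc⟩

lemma domNum_le_vdel_add [Fintype V] [DecidableEq V] (G : SimpleGraph V) (z : V) :
    domNum G ≤ domNum (vdel G z) + 1 := by
  obtain ⟨D, hD, hc⟩ := exists_gammaSet (vdel G z)
  have hdom : IsDomSet G (insert z (D.map (Function.Embedding.subtype _))) := by
    intro v
    by_cases hv : v = z
    · exact ⟨z, Finset.mem_insert_self _ _, Or.inl hv.symm⟩
    · obtain ⟨u, hu, hh⟩ := hD ⟨v, hv⟩
      refine ⟨u.val, Finset.mem_insert_of_mem (Finset.mem_map_of_mem _ hu), ?_⟩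
      rcases hh with hh | hh
      · exact Or.inl (congrArg Subtype.val hh)
      · exact Or.inr hh
  have h1 := domNum_le' G hdom
  have h2 := Finset.card_insert_le z (D.map (Function.Embedding.subtype (fun u => u ≠ z)))
  have h3 : (D.map (Function.Embedding.subtype (fun u => u ≠ z))).card = D.card :=
    Finset.card_map _
  omega

end Aux

theorem hypoUD_delete_two [Fintype V] [DecidableEq V] (G : SimpleGraph V)
    (h : HypoUD G) (h3 : 3 ≤ Fintype.card V) :
    ∀ x y : V, domNum G - 1 ≤ domNum (vdel2 G x y) := by
  intro x y
  by_contra hcon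
  push_neg at hcon
  obtain ⟨M, hMdom, hMcard⟩ := exists_gammaSet (vdel2 G x y)
  set M' : Finset V := M.map (Function.Embedding.subtype _) with hM'
  have hM'card : M'.card = domNum (vdel2 G x y) := by
    rw [hM', Finset.card_map]; exact hMcard
  have hγ2 : M'.card + 2 ≤ domNum G := by omega
  have hM'mem : ∀ s ∈ M', s ≠ x ∧ s ≠ y := by
    intro s hs
    rw [hM', Finset.mem_map] at hs
    obtain ⟨a, -, rfl⟩ := hs
    exact a.2
  have hM'dom : ∀ v, v ≠ x → v ≠ y → ∃ u ∈ M', u = v ∨ G.Adj u v := by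
    intro v hvx hvy
    obtain ⟨u, hu, hh⟩ := hMdom ⟨v, hvx, hvy⟩
    refine ⟨u.val, by rw [hM']; exact Finset.mem_map_of_mem _ hu, ?_⟩
    rcases hh with hh | hh
    · exact Or.inl (congrArg Subtype.val hh)
    · exact Or.inr hh
  have claim1 : ∀ u ∈ insert y M', ¬(u = x ∨ G.Adj u x) := by
    intro u hu hux
    have hdom : IsDomSet G (insert y M') := by
      intro v
      by_cases hvx : v = x
      · exact ⟨u, hu, by rwa [hvx]⟩
      · by_cases hvy : v = y
        · exact ⟨y, Finset.mem_insert_self _ _, Or.inl hvy.symm⟩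
        · obtain ⟨w, hw, hh⟩ := hM'dom v hvx hvy
          exact ⟨w, Finset.mem_insert_of_mem hw, hh⟩
    have h1 := domNum_le' G hdom
    have h2 := Finset.card_insert_le y M'
    omega
  have hyx : y ≠ x := fun hh => claim1 y (Finset.mem_insert_self _ _) (Or.inl hh)
  have hxM : x ∉ M' := fun hh => (hM'mem x hh).1 rfl
  by_cases hiso : ∃ u, G.Adj u x
  · obtain ⟨u0, hu0⟩ := hiso
    have hu0x : u0 ≠ x := hu0.ne
    have hu0y : u0 ≠ y := by
      rintro rfl
      exact claim1 u0 (Finset.mem_insert_self _ _) (Or.inr hu0)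
    have hu0M : u0 ∉ M' := fun hh =>
      claim1 u0 (Finset.mem_insert_of_mem hh) (Or.inr hu0)
    set S1 : Finset V := insert x M' with hS1def
    set S2 : Finset V := insert u0 M' with hS2def
    have hS1y : ∀ s ∈ S1, s ≠ y := by
      intro s hs
      rcases Finset.mem_insert.1 hs with rfl | hs
      · exact fun hh => hyx hh.symm
      · exact (hM'mem s hs).2
    have hS2y : ∀ s ∈ S2, s ≠ y := by
      intro s hs
      rcases Finset.mem_insert.1 hs with rfl | hs
      · exact hu0y
      · exact (hM'mem s hs).2
    set D1 : Finset {u : V // u ≠ y} := S1.subtype (fun u => u ≠ y) with hD1def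
    set D2 : Finset {u : V // u ≠ y} := S2.subtype (fun u => u ≠ y) with hD2def
    have hmap1 : D1.map (Function.Embedding.subtype _) = S1 := Finset.subtype_map_of_mem hS1y
    have hmap2 : D2.map (Function.Embedding.subtype _) = S2 := Finset.subtype_map_of_mem hS2y
    have hc1 : D1.card = M'.card + 1 := by
      rw [← Finset.card_map (Function.Embedding.subtype _), hmap1, hS1def]
      exact Finset.card_insert_of_notMem hxM
    have hc2 : D2.card = M'.card + 1 := by
      rw [← Finset.card_map (Function.Embedding.subtype _), hmap2, hS2def]
      exact Finset.card_insert_of_notMem hu0M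
    have hd1 : IsDomSet (vdel G y) D1 := by
      rintro ⟨v, hvy⟩
      by_cases hvx : v = x
      · exact ⟨⟨x, fun hh => hyx hh.symm⟩,
          Finset.mem_subtype.2 (Finset.mem_insert_self _ _), Or.inl (Subtype.ext hvx.symm)⟩
      · obtain ⟨u, hu, hh⟩ := hM'dom v hvx hvy
        refine ⟨⟨u, (hM'mem u hu).2⟩,
          Finset.mem_subtype.2 (Finset.mem_insert_of_mem hu), ?_⟩
        rcases hh with hh | hh
        · exact Or.inl (Subtype.ext hh)
        · exact Or.inr hh
    have hd2 : IsDomSet (vdel G y) D2 := by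
      rintro ⟨v, hvy⟩
      by_cases hvx : v = x
      · refine ⟨⟨u0, hu0y⟩, Finset.mem_subtype.2 (Finset.mem_insert_self _ _), Or.inr ?_⟩
        subst hvx
        exact hu0
      · obtain ⟨u, hu, hh⟩ := hM'dom v hvx hvy
        refine ⟨⟨u, (hM'mem u hu).2⟩,
          Finset.mem_subtype.2 (Finset.mem_insert_of_mem hu), ?_⟩
        rcases hh with hh | hh
        · exact Or.inl (Subtype.ext hh)
        · exact Or.inr hh
    have hlb := domNum_le_vdel_add G y
    have hub := domNum_le' _ hd1
    have hdn : domNum (vdel G y) = M'.card + 1 := by omega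
    have hg1 : IsGammaSet (vdel G y) D1 := ⟨hd1, by rw [hc1, hdn]⟩
    have hg2 : IsGammaSet (vdel G y) D2 := ⟨hd2, by rw [hc2, hdn]⟩
    have hDeq : D1 = D2 := (h.2 y).unique hg1 hg2
    have hSeq : S1 = S2 := by rw [← hmap1, ← hmap2, hDeq]
    have hx2 : x ∈ S2 := by rw [← hSeq]; exact Finset.mem_insert_self x M'
    rcases Finset.mem_insert.1 hx2 with hh | hh
    · exact hu0x hh.symm
    · exact hxM hh
  · push_neg at hiso
    obtain ⟨A, B, hA, hB, hAB⟩ := h.1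
    have hxmem : ∀ C : Finset V, IsDomSet G C → x ∈ C := by
      intro C hC
      obtain ⟨u, hu, hh⟩ := hC x
      rcases hh with rfl | hh
      · exact hu
      · exact absurd hh (hiso u)
    have herase_dom : ∀ C : Finset V, IsDomSet G C →
        ∀ v, v ≠ x → ∃ u ∈ C.erase x, u = v ∨ G.Adj u v := by
      intro C hC v hvx
      obtain ⟨u, hu, hh⟩ := hC v
      have hux : u ≠ x := by
        rintro rfl
        rcases hh with rfl | hh
        · exact hvx rfl
        · exact hiso v hh.symm
      exact ⟨u, Finset.mem_erase.2 ⟨hux, hu⟩, hh⟩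
    have step : ∀ C : Finset V, IsGammaSet G C →
        IsDomSet (vdel G x) ((C.erase x).subtype (fun u => u ≠ x)) ∧
        ((C.erase x).subtype (fun u => u ≠ x)).card = domNum G - 1 ∧
        ((C.erase x).subtype (fun u => u ≠ x)).map (Function.Embedding.subtype _)
          = C.erase x := by
      intro C hC
      have hmap : ((C.erase x).subtype (fun u => u ≠ x)).map (Function.Embedding.subtype _)
          = C.erase x :=
        Finset.subtype_map_of_mem (fun s hs => Finset.ne_of_mem_erase hs)
      have hcard : ((C.erase x).subtype (fun u => u ≠ x)).card = domNum G - 1 := by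
        rw [← Finset.card_map (Function.Embedding.subtype _), hmap,
          Finset.card_erase_of_mem (hxmem C hC.1), hC.2]
      refine ⟨?_, hcard, hmap⟩
      rintro ⟨v, hvx⟩
      obtain ⟨u, hu, hh⟩ := herase_dom C hC.1 v hvx
      refine ⟨⟨u, Finset.ne_of_mem_erase hu⟩, Finset.mem_subtype.2 hu, ?_⟩
      rcases hh with hh | hh
      · exact Or.inl (Subtype.ext hh)
      · exact Or.inr hh
    obtain ⟨hdA, hcA, hmA⟩ := step A hA
    obtain ⟨hdB, hcB, hmB⟩ := step B hB
    have hlb := domNum_le_vdel_add G x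
    have hub := domNum_le' _ hdA
    have hdn : domNum (vdel G x) = domNum G - 1 := by omega
    have hgA : IsGammaSet (vdel G x) _ := ⟨hdA, by rw [hcA, hdn]⟩
    have hgB : IsGammaSet (vdel G x) _ := ⟨hdB, by rw [hcB, hdn]⟩
    have hDeq := (h.2 x).unique hgA hgB
    have hEeq : A.erase x = B.erase x := by rw [← hmA, ← hmB, hDeq]
    apply hAB
    rw [← Finset.insert_erase (hxmem A hA.1), hEeq, Finset.insert_erase (hxmem B hB.1)]
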